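/- Let a1, a2, a3 be real numbers with a1*a2*a3 ≠ 0 and A = a1*a2 + a1*a3 + a2*a3 ≠ 0. If there exist positive reals x1, x2, x3 satisfying system (S) together with F1(x1,x2,x3) = 0 (i.e., the corresponding singular point of the reduced planar Ricci flow system has vanishing trace ρ), then Q1(a1,a2,a3) := 4*(a1+a2)*(a1+a3)*(a2+a3) - 2*a1 - 2*a2 - 2*a3 + 1 = 0. -/

import Mathlib

/-!
Since (S) and `F1` are homogeneous, we may pass to `u = x1/x3`, `v = x2/x3`. Write `s = a1 + a2`,
`p = a1 + a3`, `q = a2 + a3`, so that the conclusion reads `4spq = s + p + q - 1`. The combinations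
`a2 * (S2) - F1` and `a1 * (S1) - F1` are `A` times `s u² - u + q` and `s v² - v + p`, and modulo
these two quadratics `F1 = a1 a2 u v (1 - u - v + 2suv)`. Hence `u + v - 2suv = 1`, and
substituting `q = u(1 - su)`, `p = v(1 - sv)` the conclusion becomes
`(u + v - 2suv)² - (u - v)² = 4uv(1 - su)(1 - sv)`.
-/

noncomputable section
open Real Set

/-- `A = a1*a2 + a1*a3 + a2*a3`. -/
def AA (a1 a2 a3 : ℝ) : ℝ := a1*a2 + a1*a3 + a2*a3

/-- First equation of system (S). -/
def eqS1 (a1 a2 a3 x1 x2 x3 : ℝ) : Prop :=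
  (a2 + a3)*(a1*x2^2 + a1*x3^2 - x2*x3) + (a2*x2 + a3*x3)*x1
    - (a1*a2 + a1*a3 + 2*a2*a3)*x1^2 = 0

/-- Second equation of system (S). -/
def eqS2 (a1 a2 a3 x1 x2 x3 : ℝ) : Prop :=
  (a1 + a3)*(a2*x1^2 + a2*x3^2 - x1*x3) + (a1*x1 + a3*x3)*x2
    - (a1*a2 + 2*a1*a3 + a2*a3)*x2^2 = 0

/-- The quantity `F1` (trace numerator). -/
def F1 (a1 a2 a3 x1 x2 x3 : ℝ) : ℝ :=
  a1*a2*x1*x2 + a1*a3*x1*x3 + a2*a3*x2*x3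
    - (AA a1 a2 a3 + a2*a3)*a1*x1^2 - (AA a1 a2 a3 + a1*a3)*a2*x2^2
    - (AA a1 a2 a3 + a1*a2)*a3*x3^2

theorem four_mul_mul_mul_eq_add_add_sub_one_of_roots {R : Type*} [CommRing R] {s p q u v : R}
    (hu : s*u^2 - u + q = 0) (hv : s*v^2 - v + p = 0) (huv : 1 - u - v + 2*s*u*v = 0) :
    4*s*p*q = s + p + q - 1 := by
  obtain rfl : q = u - s*u^2 := by linear_combination hu
  obtain rfl : p = v - s*v^2 := by linear_combination hv
  linear_combination (s*(1 - u - v + 2*s*u*v) - 2*s + 1) * huv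

section

variable {a1 a2 a3 x1 x2 x3 : ℝ}

theorem eqS1.div (h : eqS1 a1 a2 a3 x1 x2 x3) (hx3 : x3 ≠ 0) :
    eqS1 a1 a2 a3 (x1/x3) (x2/x3) 1 := by
  unfold eqS1 at *
  field_simp
  linear_combination h

theorem eqS2.div (h : eqS2 a1 a2 a3 x1 x2 x3) (hx3 : x3 ≠ 0) :
    eqS2 a1 a2 a3 (x1/x3) (x2/x3) 1 := by
  unfold eqS2 at *
  field_simp
  linear_combination h

theorem F1_div (hx3 : x3 ≠ 0) :
    F1 a1 a2 a3 (x1/x3) (x2/x3) 1 = F1 a1 a2 a3 x1 x2 x3 / x3^2 := by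
  unfold F1
  field_simp

end

section

variable {a1 a2 a3 u v : ℝ}

theorem quadratic_of_eqS2 (hA : AA a1 a2 a3 ≠ 0) (h : eqS2 a1 a2 a3 u v 1)
    (hF : F1 a1 a2 a3 u v 1 = 0) : (a1 + a2)*u^2 - u + (a2 + a3) = 0 := by
  refine (mul_eq_zero.mp ?_).resolve_left hA
  unfold eqS2 at h
  unfold F1 at hF
  unfold AA at *
  linear_combination a2*h - hF

theorem quadratic_of_eqS1 (hA : AA a1 a2 a3 ≠ 0) (h : eqS1 a1 a2 a3 u v 1)
    (hF : F1 a1 a2 a3 u v 1 = 0) : (a1 + a2)*v^2 - v + (a1 + a3) = 0 := by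
  refine (mul_eq_zero.mp ?_).resolve_left hA
  unfold eqS1 at h
  unfold F1 at hF
  unfold AA at *
  linear_combination a1*h - hF

theorem F1_add_mul_quadratics :
    F1 a1 a2 a3 u v 1 + a1*(a3 + a2*v^2)*((a1 + a2)*u^2 - u + (a2 + a3))
        + a2*(a3 + a1*u^2)*((a1 + a2)*v^2 - v + (a1 + a3))
      = a1*a2*u*v*(1 - u - v + 2*(a1 + a2)*u*v) := by
  unfold F1 AA
  ring

theorem relation_of_F1_eq_zero (ha1 : a1 ≠ 0) (ha2 : a2 ≠ 0) (hu : u ≠ 0) (hv : v ≠ 0)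
    (hqu : (a1 + a2)*u^2 - u + (a2 + a3) = 0) (hqv : (a1 + a2)*v^2 - v + (a1 + a3) = 0)
    (hF : F1 a1 a2 a3 u v 1 = 0) : 1 - u - v + 2*(a1 + a2)*u*v = 0 := by
  have h := F1_add_mul_quadratics (a1 := a1) (a2 := a2) (a3 := a3) (u := u) (v := v)
  rw [hF, hqu, hqv] at h
  simpa [ha1, ha2, hu, hv] using h.symm

end

theorem trace_zero_singular_point_implies_Q1_zero (a1 a2 a3 : ℝ)
    (ha : a1*a2*a3 ≠ 0) (hA : AA a1 a2 a3 ≠ 0)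
    (h : ∃ x1 x2 x3 : ℝ, 0 < x1 ∧ 0 < x2 ∧ 0 < x3 ∧
      eqS1 a1 a2 a3 x1 x2 x3 ∧ eqS2 a1 a2 a3 x1 x2 x3 ∧ F1 a1 a2 a3 x1 x2 x3 = 0) :
    4*(a1 + a2)*(a1 + a3)*(a2 + a3) - 2*a1 - 2*a2 - 2*a3 + 1 = 0 := by
  obtain ⟨x1, x2, x3, hx1, hx2, hx3, h1, h2, hF⟩ := h
  have ha1 : a1 ≠ 0 := left_ne_zero_of_mul (left_ne_zero_of_mul ha)
  have ha2 : a2 ≠ 0 := right_ne_zero_of_mul (left_ne_zero_of_mul ha)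
  have hF' : F1 a1 a2 a3 (x1/x3) (x2/x3) 1 = 0 := by rw [F1_div hx3.ne', hF, zero_div]
  have hu := quadratic_of_eqS2 hA (h2.div hx3.ne') hF'
  have hv := quadratic_of_eqS1 hA (h1.div hx3.ne') hF'
  have huv := relation_of_F1_eq_zero ha1 ha2 (div_pos hx1 hx3).ne' (div_pos hx2 hx3).ne' hu hv hF'
  linear_combination four_mul_mul_mul_eq_add_add_sub_one_of_roots hu hv huv
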